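/- Let f be a convex function of one variable on an interval and x, y self-adjoint operators on a finite-dimensional Hilbert space with spectra in the interval. Then f(λx + (1−λ)y) ≺_w λ f(x) + (1−λ) f(y) for all λ ∈ [0,1]. -/

import Mathlib

open Matrix
open scoped ComplexOrder Classical

/-- The values of a tuple of reals rearranged in decreasing order. -/
noncomputable def sortedDesc {m : ℕ} (a : Fin m → ℝ) : Fin m → ℝ :=
  fun i => (a ∘ Tuple.sort a) i.rev

/-- The eigenvalues of a Hermitian matrix in decreasing order (junk `0` otherwise). -/
noncomputable def eigDesc {m : ℕ} (A : Matrix (Fin m) (Fin m) ℂ) : Fin m → ℝ :=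
  if h : A.IsHermitian then sortedDesc h.eigenvalues else 0

/-- Weak majorization `A ≺_w B` of Hermitian matrices: all partial sums of decreasingly
ordered eigenvalues of `A` are dominated by those of `B`. -/
def WeakMaj {m : ℕ} (A B : Matrix (Fin m) (Fin m) ℂ) : Prop :=
  ∀ k : ℕ, k ≤ m →
    ∑ i ∈ Finset.univ.filter (fun i : Fin m => (i : ℕ) < k), eigDesc A i ≤
      ∑ i ∈ Finset.univ.filter (fun i : Fin m => (i : ℕ) < k), eigDesc B i

/-- `f` applied to a Hermitian matrix via functional calculus (junk `0` otherwise). -/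
noncomputable def hfun {m : ℕ} (f : ℝ → ℝ) (A : Matrix (Fin m) (Fin m) ℂ) :
    Matrix (Fin m) (Fin m) ℂ :=
  if h : A.IsHermitian then h.cfc f else 0


section AujlaSilvaAux
open Polynomial List

lemma charpoly_unitary_conj {n : ℕ} (U : Matrix.unitaryGroup (Fin n) ℂ)
    (D : Matrix (Fin n) (Fin n) ℂ) :
    ((U : Matrix (Fin n) (Fin n) ℂ) * D * star (U : Matrix (Fin n) (Fin n) ℂ)).charpoly
      = D.charpoly := by
  set V : Matrix (Fin n) (Fin n) ℂ := (U : Matrix (Fin n) (Fin n) ℂ)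
  have hUV : V * star V = 1 := Unitary.coe_mul_star_self U
  have hVU : star V * V = 1 := Unitary.coe_star_mul_self U
  let Cm : ℂ →+* ℂ[X] := Polynomial.C
  have key : charmatrix (V * D * star V) = V.map Cm * charmatrix D * (star V).map Cm := by
    unfold charmatrix
    rw [mul_sub, sub_mul]
    congr 1
    · have : Matrix.scalar (Fin n) (X : ℂ[X]) = (X : ℂ[X]) • (1 : Matrix (Fin n) (Fin n) ℂ[X]) := by
        simp [Matrix.scalar, Matrix.smul_eq_diagonal_mul]
      rw [this, Matrix.mul_smul, smul_mul_assoc, mul_one, ← Matrix.map_mul, hUV]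
      simp
    · simp only [RingHom.mapMatrix_apply]
      rw [← Matrix.map_mul, ← Matrix.map_mul]
  rw [Matrix.charpoly, key, Matrix.det_mul, Matrix.det_mul, mul_comm, ← mul_assoc,
    ← Matrix.det_mul, ← Matrix.map_mul, hVU]
  simp [Matrix.charpoly]

lemma charpoly_diagonal_real {n : ℕ} (d : Fin n → ℝ) :
    (Matrix.diagonal (fun i => (d i : ℂ))).charpoly = ∏ i, (X - Polynomial.C (d i : ℂ)) := by
  have : charmatrix (Matrix.diagonal (fun i => (d i : ℂ)))
      = Matrix.diagonal (fun i => (X - Polynomial.C (d i : ℂ))) := by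
    ext i j
    by_cases h : i = j
    · subst h; simp
    · simp [h, Matrix.diagonal_apply_ne _ h]
  rw [Matrix.charpoly, this, Matrix.det_diagonal]


lemma sortedDesc_eq_of_perm {m : ℕ} {a b : Fin m → ℝ}
    (h : (List.ofFn a : Multiset ℝ) = (List.ofFn b : Multiset ℝ)) :
    sortedDesc a = sortedDesc b := by
  have hp : List.Perm (List.ofFn a) (List.ofFn b) := Multiset.coe_eq_coe.mp h
  have h1 : List.Perm (List.ofFn (a ∘ Tuple.sort a)) (List.ofFn (b ∘ Tuple.sort b)) :=
    ((Equiv.Perm.ofFn_comp_perm _ a).trans hp).trans (Equiv.Perm.ofFn_comp_perm _ b).symm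
  have hs1 : (List.ofFn (a ∘ Tuple.sort a)).SortedLE :=
    List.sortedLE_ofFn_iff.mpr (Tuple.monotone_sort a)
  have hs2 : (List.ofFn (b ∘ Tuple.sort b)).SortedLE :=
    List.sortedLE_ofFn_iff.mpr (Tuple.monotone_sort b)
  have := List.Perm.eq_of_sortedLE hs1 hs2 h1
  have hfn : a ∘ Tuple.sort a = b ∘ Tuple.sort b := by
    funext i
    have := List.ofFn_inj.mp this
    exact congrFun this i
  funext i
  simp only [sortedDesc, hfn]

lemma charpoly_conj_diag {n : ℕ} (U : Matrix.unitaryGroup (Fin n) ℂ) (d : Fin n → ℝ) :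
    ((U : Matrix (Fin n) (Fin n) ℂ) * Matrix.diagonal (RCLike.ofReal ∘ d) *
      star (U : Matrix (Fin n) (Fin n) ℂ)).charpoly = ∏ i, (X - Polynomial.C (d i : ℂ)) := by
  rw [charpoly_unitary_conj U _]
  exact charpoly_diagonal_real d

lemma eig_eq_of_conj_diag {n : ℕ} {A : Matrix (Fin n) (Fin n) ℂ} (hA : A.IsHermitian)
    (U : Matrix.unitaryGroup (Fin n) ℂ) (d : Fin n → ℝ)
    (h : A = (U : Matrix (Fin n) (Fin n) ℂ) * Matrix.diagonal (RCLike.ofReal ∘ d) *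
      star (U : Matrix (Fin n) (Fin n) ℂ)) :
    (List.ofFn hA.eigenvalues : Multiset ℝ) = (List.ofFn d : Multiset ℝ) := by
  have h1 : A.charpoly = ∏ i, (X - Polynomial.C (hA.eigenvalues i : ℂ)) := by
    conv_lhs => rw [hA.spectral_theorem]
    exact charpoly_conj_diag _ _
  have h2 : A.charpoly = ∏ i, (X - Polynomial.C (d i : ℂ)) := by
    conv_lhs => rw [h]
    exact charpoly_conj_diag _ _
  have key : Multiset.map (fun x : ℝ => (x:ℂ)) (List.ofFn hA.eigenvalues)
      = Multiset.map (fun x : ℝ => (x:ℂ)) (List.ofFn d) := by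
    have e1 : ∀ (c : Fin n → ℝ), (∏ i, (X - Polynomial.C (c i : ℂ))).roots
        = Multiset.map (fun x : ℝ => (x:ℂ)) (List.ofFn c) := by
      intro c
      have : (∏ i, (X - Polynomial.C (c i : ℂ)))
          = (Multiset.map (fun a : ℂ => X - Polynomial.C a)
              (Multiset.map (fun x : ℝ => (x:ℂ)) (List.ofFn c))).prod := by
        simp [Finset.prod_eq_multiset_prod, List.ofFn_eq_map, Fin.univ_def,
          Multiset.map_map, Function.comp]
        rfl
      rw [this, Polynomial.roots_multiset_prod_X_sub_C]
    have := h1.symm.trans h2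
    rw [← e1, ← e1, this]
  exact Multiset.map_injective (fun x y hxy => Complex.ofReal_injective hxy) key


lemma sortedDesc_antitone {m : ℕ} (a : Fin m → ℝ) : Antitone (sortedDesc a) := by
  intro p q hpq
  exact Tuple.monotone_sort a (Fin.rev_le_rev.mpr hpq)

lemma card_filter_lt {m k : ℕ} (hk : k ≤ m) :
    (Finset.univ.filter (fun p : Fin m => (p : ℕ) < k)).card = k := by
  apply Finset.card_eq_of_bijective (fun i h => ⟨i, lt_of_lt_of_le h hk⟩)
  · intro a ha
    simp only [Finset.mem_filter, Finset.mem_univ, true_and] at ha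
    exact ⟨a, ha, rfl⟩
  · intro i h
    simp [h]
  · intro i j hi hj hij
    simpa using congrArg Fin.val hij

/-- abstract rearrangement bound -/
lemma sum_mul_le_topk {m k : ℕ} (hk : k ≤ m) (a e : Fin m → ℝ)
    (he0 : ∀ j, 0 ≤ e j) (he1 : ∀ j, e j ≤ 1) (hsum : ∑ j, e j = k) :
    ∑ j, a j * e j ≤ ∑ p ∈ Finset.univ.filter (fun p : Fin m => (p : ℕ) < k), sortedDesc a p := by
  classical
  set π : Equiv.Perm (Fin m) := (Fin.revPerm).trans (Tuple.sort a) with hπ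
  have hre : ∑ j, a j * e j = ∑ p, sortedDesc a p * e (π p) := by
    rw [← Equiv.sum_comp π (fun j => a j * e j)]
    rfl
  set b := sortedDesc a with hb
  set e' : Fin m → ℝ := fun p => e (π p) with he'
  have he'0 : ∀ p, 0 ≤ e' p := fun p => he0 _
  have he'1 : ∀ p, e' p ≤ 1 := fun p => he1 _
  have hsum' : ∑ p, e' p = k := by
    rw [he', Equiv.sum_comp π e, hsum]
  rw [hre]
  by_cases hkm : k = m
  · have hall : ∀ p, e' p = 1 := by
      by_contra hcon
      push_neg at hcon
      obtain ⟨p, hp⟩ := hcon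
      have hlt : ∑ p, e' p < ∑ _p : Fin m, (1:ℝ) :=
        Finset.sum_lt_sum (fun i _ => he'1 i)
          ⟨p, Finset.mem_univ p, lt_of_le_of_ne (he'1 p) hp⟩
      rw [hsum'] at hlt
      simp only [Finset.sum_const, Finset.card_univ, Fintype.card_fin, nsmul_eq_mul,
        mul_one] at hlt
      rw [hkm] at hlt
      exact absurd hlt (lt_irrefl _)
    have hfil : Finset.univ.filter (fun p : Fin m => (p : ℕ) < k) = Finset.univ := by
      ext p; simp [hkm, p.isLt]
    rw [hfil]
    apply le_of_eq
    exact Finset.sum_congr rfl (fun p _ => by show b p * e' p = b p; rw [hall p, mul_one])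
  · have hkm' : k < m := lt_of_le_of_ne hk hkm
    set t := b ⟨k, hkm'⟩ with ht
    set S := Finset.univ.filter (fun p : Fin m => (p : ℕ) < k) with hS
    have hcard : S.card = k := card_filter_lt hk
    have h1 : ∑ p ∈ S, b p * e' p ≤ ∑ p ∈ S, (b p + t * (e' p - 1)) := by
      apply Finset.sum_le_sum
      intro p hp
      have hpk : (p : ℕ) < k := by simpa [hS] using hp
      have hbp : t ≤ b p := sortedDesc_antitone a (by
        show p ≤ (⟨k, hkm'⟩ : Fin m)
        exact le_of_lt hpk)
      nlinarith [he'1 p, he'0 p]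
    have h2 : ∑ p ∈ Sᶜ, b p * e' p ≤ ∑ p ∈ Sᶜ, t * e' p := by
      apply Finset.sum_le_sum
      intro p hp
      have hpk : k ≤ (p : ℕ) := by
        simp only [hS, Finset.mem_compl, Finset.mem_filter, Finset.mem_univ, true_and,
          not_lt] at hp
        exact hp
      have hbp : b p ≤ t := sortedDesc_antitone a (by
        show (⟨k, hkm'⟩ : Fin m) ≤ p
        exact hpk)
      nlinarith [he'0 p]
    have e1 : ∑ p ∈ S, (b p + t * (e' p - 1))
        = ∑ p ∈ S, b p + t * (∑ p ∈ S, e' p) - t * k := by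
      rw [Finset.sum_add_distrib, ← Finset.mul_sum (a := t), Finset.sum_sub_distrib,
        Finset.sum_const, hcard]
      ring
    have e2 : ∑ p ∈ Sᶜ, t * e' p = t * ∑ p ∈ Sᶜ, e' p := by
      rw [Finset.mul_sum]
    have e3 : ∑ p ∈ S, e' p + ∑ p ∈ Sᶜ, e' p = (k : ℝ) := by
      rw [Finset.sum_add_sum_compl S e', hsum']
    have hsplit : ∑ p, b p * e' p = ∑ p ∈ S, b p * e' p + ∑ p ∈ Sᶜ, b p * e' p :=
      (Finset.sum_add_sum_compl S _).symm
    rw [hsplit]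
    have := add_le_add h1 h2
    rw [e1, e2] at this
    have e4 : t * (∑ p ∈ S, e' p + ∑ p ∈ Sᶜ, e' p) = t * k := by rw [e3]
    rw [mul_add] at e4
    linarith

variable {m : ℕ}

lemma quad_expand {A : Matrix (Fin m) (Fin m) ℂ} (hA : A.IsHermitian) (g : ℝ → ℝ)
    (u : Fin m → ℂ) :
    star u ⬝ᵥ ((hA.eigenvectorUnitary : Matrix (Fin m) (Fin m) ℂ)
        * Matrix.diagonal (RCLike.ofReal ∘ g ∘ hA.eigenvalues)
        * star (hA.eigenvectorUnitary : Matrix (Fin m) (Fin m) ℂ)) *ᵥ u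
      = ((∑ j, g (hA.eigenvalues j)
          * Complex.normSq ((star (hA.eigenvectorUnitary : Matrix (Fin m) (Fin m) ℂ) *ᵥ u) j)
            : ℝ) : ℂ) := by
  set V : Matrix (Fin m) (Fin m) ℂ := (hA.eigenvectorUnitary : Matrix (Fin m) (Fin m) ℂ)
  set c : Fin m → ℂ := star V *ᵥ u with hc
  have hstar : star u ᵥ* V = star c := by
    rw [hc, star_mulVec, star_eq_conjTranspose, conjTranspose_conjTranspose]
  rw [← Matrix.mulVec_mulVec, ← Matrix.mulVec_mulVec, Matrix.dotProduct_mulVec, hstar]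
  have : Matrix.diagonal (RCLike.ofReal ∘ g ∘ hA.eigenvalues) *ᵥ c
      = fun j => ((g (hA.eigenvalues j) : ℝ) : ℂ) * c j := by
    funext j
    simp [Matrix.mulVec_diagonal]
  rw [this]
  simp only [dotProduct, Pi.star_apply]
  push_cast
  congr 1
  funext j
  have : (starRingEnd ℂ) (c j) * c j = ((Complex.normSq (c j) : ℝ) : ℂ) := by
    rw [mul_comm]
    exact Complex.mul_conj (c j)
  have hsc : star (c j) = (starRingEnd ℂ) (c j) := rfl
  rw [hsc]
  rw [show (starRingEnd ℂ) (c j) * (((g (hA.eigenvalues j) : ℝ) : ℂ) * c j)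
      = ((g (hA.eigenvalues j) : ℝ) : ℂ) * ((starRingEnd ℂ) (c j) * c j) from by ring, this]

lemma sum_normSq_eq_one {A : Matrix (Fin m) (Fin m) ℂ} (hA : A.IsHermitian)
    (u : Fin m → ℂ) (hu : star u ⬝ᵥ u = 1) :
    ∑ j, Complex.normSq ((star (hA.eigenvectorUnitary : Matrix (Fin m) (Fin m) ℂ) *ᵥ u) j)
      = 1 := by
  have h := quad_expand hA (fun _ => 1) u
  have h2 : (hA.eigenvectorUnitary : Matrix (Fin m) (Fin m) ℂ)
      * Matrix.diagonal (RCLike.ofReal ∘ (fun _ => (1:ℝ)) ∘ hA.eigenvalues)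
      * star (hA.eigenvectorUnitary : Matrix (Fin m) (Fin m) ℂ) = 1 := by
    have : Matrix.diagonal (RCLike.ofReal ∘ (fun _ => (1:ℝ)) ∘ hA.eigenvalues)
        = (1 : Matrix (Fin m) (Fin m) ℂ) := by
      have : (Complex.ofReal ∘ (fun _ => (1:ℝ)) ∘ hA.eigenvalues) = fun _ : Fin m => (1:ℂ) := by
        funext j; simp
      rw [show (RCLike.ofReal : ℝ → ℂ) = Complex.ofReal from rfl, this, Matrix.diagonal_one]
    rw [this, mul_one]
    exact Unitary.coe_mul_star_self _
  rw [h2] at h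
  simp only [one_mulVec, hu, one_mul] at h
  have h2 := congrArg Complex.re h
  simp only [Complex.one_re, Complex.ofReal_re, one_mul] at h2
  exact h2.symm

lemma quadform_re {A : Matrix (Fin m) (Fin m) ℂ} (hA : A.IsHermitian) (u : Fin m → ℂ) :
    (star u ⬝ᵥ A *ᵥ u).re = ∑ j, hA.eigenvalues j
      * Complex.normSq ((star (hA.eigenvectorUnitary : Matrix (Fin m) (Fin m) ℂ) *ᵥ u) j) := by
  conv_lhs => rw [hA.spectral_theorem, Unitary.conjStarAlgAut_apply]
  have := quad_expand hA id u
  rw [show (RCLike.ofReal ∘ hA.eigenvalues : Fin m → ℂ)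
      = RCLike.ofReal ∘ id ∘ hA.eigenvalues from rfl, this]
  simp

lemma cfc_quadform_re {A : Matrix (Fin m) (Fin m) ℂ} (hA : A.IsHermitian) (f : ℝ → ℝ)
    (u : Fin m → ℂ) :
    (star u ⬝ᵥ (hA.cfc f) *ᵥ u).re = ∑ j, f (hA.eigenvalues j)
      * Complex.normSq ((star (hA.eigenvectorUnitary : Matrix (Fin m) (Fin m) ℂ) *ᵥ u) j) := by
  rw [Matrix.IsHermitian.cfc, Unitary.conjStarAlgAut_apply, quad_expand hA f u]
  simp


lemma jensen {m : ℕ} {s : Set ℝ} {f : ℝ → ℝ} (hf : ConvexOn ℝ s f)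
    {A : Matrix (Fin m) (Fin m) ℂ} (hA : A.IsHermitian) (hAs : ∀ i, hA.eigenvalues i ∈ s)
    (u : Fin m → ℂ) (hu : star u ⬝ᵥ u = 1) :
    (star u ⬝ᵥ A *ᵥ u).re ∈ s ∧
      f ((star u ⬝ᵥ A *ᵥ u).re) ≤ (star u ⬝ᵥ (hA.cfc f) *ᵥ u).re := by
  set w : Fin m → ℝ := fun j =>
    Complex.normSq ((star (hA.eigenvectorUnitary : Matrix (Fin m) (Fin m) ℂ) *ᵥ u) j) with hw
  have hw0 : ∀ j ∈ Finset.univ, (0:ℝ) ≤ w j := fun j _ => Complex.normSq_nonneg _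
  have hw1 : ∑ j, w j = 1 := sum_normSq_eq_one hA u hu
  have hq : (star u ⬝ᵥ A *ᵥ u).re = ∑ j, w j • hA.eigenvalues j := by
    rw [quadform_re hA u]
    exact Finset.sum_congr rfl (fun j _ => by rw [smul_eq_mul, mul_comm])
  constructor
  · rw [hq]
    exact hf.1.sum_mem hw0 hw1 (fun i _ => hAs i)
  · rw [hq, cfc_quadform_re hA f u]
    have := hf.map_sum_le hw0 hw1 (fun i _ => hAs i)
    refine this.trans (le_of_eq ?_)
    exact Finset.sum_congr rfl (fun j _ => by rw [smul_eq_mul, mul_comm])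

lemma kyFan {m k : ℕ} (hk : k ≤ m) {A : Matrix (Fin m) (Fin m) ℂ} (hA : A.IsHermitian)
    (u : Fin m → EuclideanSpace ℂ (Fin m)) (hu : Orthonormal ℂ u)
    (T : Finset (Fin m)) (hT : T.card = k) :
    ∑ i ∈ T, (star (u i : Fin m → ℂ) ⬝ᵥ A *ᵥ (u i : Fin m → ℂ)).re
      ≤ ∑ p ∈ Finset.univ.filter (fun p : Fin m => (p : ℕ) < k),
          sortedDesc hA.eigenvalues p := by
  classical
  set V : Matrix (Fin m) (Fin m) ℂ := (hA.eigenvectorUnitary : Matrix (Fin m) (Fin m) ℂ) with hV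
  set d : Fin m → ℝ := fun j => ∑ i ∈ T, Complex.normSq ((star V *ᵥ (u i : Fin m → ℂ)) j) with hd
  have hunit : ∀ i, star (u i : Fin m → ℂ) ⬝ᵥ (u i : Fin m → ℂ) = 1 := by
    intro i
    have h1 : (inner ℂ (u i) (u i) : ℂ) = 1 := by
      have := hu.1 i
      rw [@inner_self_eq_norm_sq_to_K ℂ, this]
      norm_num
    rw [← h1, EuclideanSpace.inner_eq_star_dotProduct]
    exact dotProduct_comm _ _
  have hcol : ∀ i j, (star V *ᵥ (u i : Fin m → ℂ)) j
      = (inner ℂ (hA.eigenvectorBasis j) (u i) : ℂ) := by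
    intro i j
    rw [EuclideanSpace.inner_eq_star_dotProduct]
    simp only [Matrix.mulVec, dotProduct, Pi.star_apply, star_apply, hV,
      Matrix.IsHermitian.eigenvectorUnitary_apply]
    exact Finset.sum_congr rfl (fun _ _ => mul_comm _ _)
  have hstep1 : ∑ i ∈ T, (star (u i : Fin m → ℂ) ⬝ᵥ A *ᵥ (u i : Fin m → ℂ)).re
      = ∑ j, hA.eigenvalues j * d j := by
    rw [Finset.sum_congr rfl (fun i _ => quadform_re hA (u i : Fin m → ℂ))]
    rw [Finset.sum_comm]
    exact Finset.sum_congr rfl (fun j _ => by rw [hd, Finset.mul_sum])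
  have hd0 : ∀ j, 0 ≤ d j := fun j => Finset.sum_nonneg (fun i _ => Complex.normSq_nonneg _)
  have hd1 : ∀ j, d j ≤ 1 := by
    intro j
    have hb : ∑ i ∈ T, ‖(inner ℂ (u i) (hA.eigenvectorBasis j) : ℂ)‖ ^ 2
        ≤ ‖hA.eigenvectorBasis j‖ ^ 2 := hu.sum_inner_products_le _
    have hnorm : ‖hA.eigenvectorBasis j‖ = 1 := hA.eigenvectorBasis.orthonormal.1 j
    rw [hnorm, one_pow] at hb
    refine le_trans (le_of_eq ?_) hb
    refine Finset.sum_congr rfl (fun i _ => ?_)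
    rw [hcol, Complex.normSq_eq_norm_sq,
      norm_inner_symm (𝕜 := ℂ) (hA.eigenvectorBasis j) (u i)]
  have hdsum : ∑ j, d j = k := by
    rw [hd, Finset.sum_comm]
    rw [Finset.sum_congr rfl (fun i _ => sum_normSq_eq_one hA _ (hunit i))]
    simp [hT]
  rw [hstep1]
  exact sum_mul_le_topk hk _ d hd0 hd1 hdsum


lemma isHermitian_smul_real {m : ℕ} (r : ℝ) {A : Matrix (Fin m) (Fin m) ℂ}
    (hA : A.IsHermitian) : (r • A).IsHermitian := by
  have : (r • A)ᴴ = r • Aᴴ := by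
    rw [Matrix.conjTranspose_smul, star_trivial]
  rw [Matrix.IsHermitian, this, hA]

lemma isHermitian_cfc {m : ℕ} {A : Matrix (Fin m) (Fin m) ℂ} (hA : A.IsHermitian)
    (f : ℝ → ℝ) : (hA.cfc f).IsHermitian := by
  rw [Matrix.IsHermitian.cfc, Unitary.conjStarAlgAut_apply, Matrix.IsHermitian]
  rw [Matrix.conjTranspose_mul, Matrix.conjTranspose_mul]
  rw [← Matrix.star_eq_conjTranspose (hA.eigenvectorUnitary : Matrix (Fin m) (Fin m) ℂ),
    ← Matrix.star_eq_conjTranspose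
      (star (hA.eigenvectorUnitary : Matrix (Fin m) (Fin m) ℂ)), star_star]
  rw [Matrix.diagonal_conjTranspose]
  have : star (RCLike.ofReal ∘ f ∘ hA.eigenvalues : Fin m → ℂ)
      = RCLike.ofReal ∘ f ∘ hA.eigenvalues := by
    funext i
    simp [Pi.star_apply, Function.comp, RCLike.star_def, RCLike.conj_ofReal]
  rw [this, mul_assoc]

lemma star_dot_self_eq_one {m : ℕ} (v : EuclideanSpace ℂ (Fin m)) (hv : ‖v‖ = 1) :
    star (v : Fin m → ℂ) ⬝ᵥ (v : Fin m → ℂ) = 1 := by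
  have h1 : (inner ℂ v v : ℂ) = 1 := by
    rw [@inner_self_eq_norm_sq_to_K ℂ, hv]
    norm_num
  rw [← h1, EuclideanSpace.inner_eq_star_dotProduct]
  exact dotProduct_comm _ _


end AujlaSilvaAux

/-- (Aujla–Silva) If `f` is convex on an interval `s` and `x`, `y` are Hermitian matrices
with spectra in `s`, then `f(λx + (1−λ)y) ≺_w λ f(x) + (1−λ) f(y)` for all `λ ∈ [0,1]`. -/
theorem weakMaj_convex_combination_one_var (m : ℕ)
    (s : Set ℝ) (hs : s.OrdConnected) (f : ℝ → ℝ) (hf : ConvexOn ℝ s f)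
    (x y : Matrix (Fin m) (Fin m) ℂ)
    (hx : x.IsHermitian) (hy : y.IsHermitian)
    (hxs : ∀ i, hx.eigenvalues i ∈ s) (hys : ∀ i, hy.eigenvalues i ∈ s) :
    ∀ l ∈ Set.Icc (0 : ℝ) 1,
      WeakMaj (hfun f (l • x + (1 - l) • y)) (l • hfun f x + (1 - l) • hfun f y) := by
  intro l hl
  obtain ⟨hl0, hl1⟩ := hl
  have hl1' : 0 ≤ 1 - l := by linarith
  have hC : (l • x + (1 - l) • y).IsHermitian :=
    (isHermitian_smul_real l hx).add (isHermitian_smul_real (1 - l) hy)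
  set C := l • x + (1 - l) • y with hCdef
  have hFx : hfun f x = hx.cfc f := dif_pos hx
  have hFy : hfun f y = hy.cfc f := dif_pos hy
  have hFC : hfun f C = hC.cfc f := dif_pos hC
  have hL : (hfun f C).IsHermitian := by rw [hFC]; exact isHermitian_cfc hC f
  have hR : (l • hfun f x + (1 - l) • hfun f y).IsHermitian := by
    rw [hFx, hFy]
    exact (isHermitian_smul_real l (isHermitian_cfc hx f)).add
      (isHermitian_smul_real (1 - l) (isHermitian_cfc hy f))
  intro k hk
  -- identify the LHS sorted eigenvalues
  have hLs : eigDesc (hfun f C) = sortedDesc (f ∘ hC.eigenvalues) := by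
    rw [eigDesc, dif_pos hL]
    apply sortedDesc_eq_of_perm
    apply eig_eq_of_conj_diag hL hC.eigenvectorUnitary (f ∘ hC.eigenvalues)
    rw [hFC, Matrix.IsHermitian.cfc, Unitary.conjStarAlgAut_apply]
  have hRs : eigDesc (l • hfun f x + (1 - l) • hfun f y) = sortedDesc hR.eigenvalues := by
    rw [eigDesc, dif_pos hR]
  rw [hLs, hRs]
  -- write the LHS top-k sum as a sum over a k-element subset T
  set S := Finset.univ.filter (fun p : Fin m => (p : ℕ) < k) with hSdef
  set ρ : Fin m → Fin m := fun p => Tuple.sort (f ∘ hC.eigenvalues) p.rev with hρ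
  have hρinj : Function.Injective ρ := fun p q hpq => by
    have := (Tuple.sort (f ∘ hC.eigenvalues)).injective hpq
    exact Fin.rev_injective this
  set T := S.image ρ with hT
  have hTcard : T.card = k := by
    rw [hT, Finset.card_image_of_injective _ hρinj]
    exact card_filter_lt hk
  have hLsum : ∑ p ∈ S, sortedDesc (f ∘ hC.eigenvalues) p = ∑ j ∈ T, f (hC.eigenvalues j) := by
    rw [hT, Finset.sum_image (fun p _ q _ h => hρinj h)]
    rfl
  rw [hLsum]
  -- eigenvectors of C
  set u : Fin m → EuclideanSpace ℂ (Fin m) := ⇑hC.eigenvectorBasis with hu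
  have huon : Orthonormal ℂ u := hC.eigenvectorBasis.orthonormal
  have hunit : ∀ j, star (u j : Fin m → ℂ) ⬝ᵥ (u j : Fin m → ℂ) = 1 :=
    fun j => star_dot_self_eq_one (u j) (huon.1 j)
  -- pointwise bound
  have hpt : ∀ j, f (hC.eigenvalues j)
      ≤ (star (u j : Fin m → ℂ) ⬝ᵥ (l • hfun f x + (1 - l) • hfun f y) *ᵥ (u j : Fin m → ℂ)).re := by
    intro j
    set v : Fin m → ℂ := (u j : Fin m → ℂ) with hv
    have hJx := jensen hf hx hxs v (hunit j)
    have hJy := jensen hf hy hys v (hunit j)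
    set a := (star v ⬝ᵥ x *ᵥ v).re with ha
    set b := (star v ⬝ᵥ y *ᵥ v).re with hb
    have hmu : hC.eigenvalues j = l * a + (1 - l) * b := by
      have h1 := hC.eigenvalues_eq j
      have h2 : star v ⬝ᵥ C *ᵥ v = l • (star v ⬝ᵥ x *ᵥ v) + (1 - l) • (star v ⬝ᵥ y *ᵥ v) := by
        rw [hCdef]
        rw [Matrix.add_mulVec, Matrix.smul_mulVec, Matrix.smul_mulVec]
        rw [dotProduct_add, dotProduct_smul, dotProduct_smul]
      rw [h1]
      show (star v ⬝ᵥ C *ᵥ v).re = _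
      rw [h2]
      simp [Complex.add_re, Complex.smul_re, ha, hb]
    have hcomb : f (hC.eigenvalues j) ≤ l * f a + (1 - l) * f b := by
      rw [hmu]
      have := hf.2 hJx.1 hJy.1 hl0 hl1' (by ring)
      simpa [smul_eq_mul] using this
    have hfin : l * f a + (1 - l) * f b
        ≤ (star v ⬝ᵥ (l • hfun f x + (1 - l) • hfun f y) *ᵥ v).re := by
      have h2 : star v ⬝ᵥ (l • hfun f x + (1 - l) • hfun f y) *ᵥ v
          = l • (star v ⬝ᵥ (hx.cfc f) *ᵥ v) + (1 - l) • (star v ⬝ᵥ (hy.cfc f) *ᵥ v) := by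
        rw [hFx, hFy]
        rw [Matrix.add_mulVec, Matrix.smul_mulVec, Matrix.smul_mulVec]
        rw [dotProduct_add, dotProduct_smul, dotProduct_smul]
      rw [h2]
      simp only [Complex.add_re, Complex.smul_re, smul_eq_mul]
      have t1 : l * f a ≤ l * (star v ⬝ᵥ (hx.cfc f) *ᵥ v).re :=
        mul_le_mul_of_nonneg_left hJx.2 hl0
      have t2 : (1 - l) * f b ≤ (1 - l) * (star v ⬝ᵥ (hy.cfc f) *ᵥ v).re :=
        mul_le_mul_of_nonneg_left hJy.2 hl1'
      linarith
    exact hcomb.trans hfin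
  calc ∑ j ∈ T, f (hC.eigenvalues j)
      ≤ ∑ j ∈ T, (star (u j : Fin m → ℂ) ⬝ᵥ (l • hfun f x + (1 - l) • hfun f y) *ᵥ
          (u j : Fin m → ℂ)).re := Finset.sum_le_sum (fun j _ => hpt j)
    _ ≤ ∑ p ∈ S, sortedDesc hR.eigenvalues p := kyFan hk hR u huon T hTcard
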